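/- For any b ≥ 1, 0 < ε < 1, and any graph G with d vertices and resilience r, the ℓ¹ ε-covering number of the set T_b(G) of probability tensors Markov to G satisfies log N(T_b(G), ε) ≤ d·b^r · log(2·d^{r+1}·b / ε). -/

import Mathlib

open SimpleGraph

/-- One step of a disintegration: `D` consists of exactly one vertex from each
connected component of the subgraph of `G` induced on `R`. -/
def DisStep {V : Type*} (G : SimpleGraph V) (R D : Set V) : Prop :=
  ∃ hsub : D ⊆ R,
    (∀ (v w : V) (hv : v ∈ D) (hw : w ∈ D), v ≠ w →
      (G.induce R).connectedComponentMk ⟨v, hsub hv⟩ ≠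
        (G.induce R).connectedComponentMk ⟨w, hsub hw⟩) ∧
    (∀ c : (G.induce R).ConnectedComponent, ∃ (v : V) (hv : v ∈ D),
      (G.induce R).connectedComponentMk ⟨v, hsub hv⟩ = c)

/-- `(D 0, D 1, ..., D (r-1))` is a disintegration of `G`: the steps partition the
vertex set and each step removes exactly one vertex per connected component of what remains. -/
def IsDisintegration {V : Type*} (G : SimpleGraph V) (D : ℕ → Set V) (r : ℕ) : Prop :=
  (∀ i, r ≤ i → D i = ∅) ∧ (⋃ i, D i) = Set.univ ∧
    ∀ i, DisStep G (Set.univ \ ⋃ j < i, D j) (D i)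

/-- The graph resilience: minimal length of a disintegration. -/
noncomputable def resilience {V : Type*} (G : SimpleGraph V) : ℕ :=
  sInf {r | ∃ D, IsDisintegration G D r}

/-- `S` separates `A` from `B` in `G`: every walk from `A` to `B` meets `S`. -/
def Separates {V : Type*} (G : SimpleGraph V) (A B S : Set V) : Prop :=
  ∀ a ∈ A, ∀ b ∈ B, ∀ w : G.Walk a b, ∃ v ∈ w.support, v ∈ S

/-- Marginal of a tensor `T` on the variables in `U`, evaluated at the assignment `σ`. -/
def marginal {V : Type*} [Fintype V] [DecidableEq V] {b : ℕ}
    (T : (V → Fin b) → ℝ) (U : Finset V) (σ : V → Fin b) : ℝ :=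
  ∑ x : V → Fin b, if ∀ u ∈ U, x u = σ u then T x else 0

/-- The (global) Markov property of a probability tensor with respect to `G`:
graph separation implies conditional independence. -/
def IsMarkov {V : Type*} [Fintype V] [DecidableEq V] {b : ℕ} (G : SimpleGraph V)
    (T : (V → Fin b) → ℝ) : Prop :=
  ∀ A B S : Finset V, Disjoint A B → Disjoint A S → Disjoint B S →
    Separates G ↑A ↑B ↑S →
    ∀ σ : V → Fin b,
      marginal T (A ∪ B ∪ S) σ * marginal T S σ =
        marginal T (A ∪ S) σ * marginal T (B ∪ S) σ

/-- The set `𝒯_b(G)` of probability tensors with `b` states per variable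
that are Markov with respect to `G`. -/
def probTensors {V : Type*} [Fintype V] [DecidableEq V] (b : ℕ) (G : SimpleGraph V) :
    Set ((V → Fin b) → ℝ) :=
  {T | (∀ x, 0 ≤ T x) ∧ (∑ x, T x = 1) ∧ IsMarkov G T}

/-- ℓ¹ distance between tensors. -/
def l1Dist {α : Type*} [Fintype α] (T T' : α → ℝ) : ℝ := ∑ x, |T x - T' x|

/-- The ε-covering number of `A` (with centers in `A`) under distance `dist`. -/
noncomputable def coverNum {α : Type*} (A : Set α) (dist : α → α → ℝ) (ε : ℝ) : ℕ∞ :=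
  sInf {n : ℕ∞ | ∃ C : Finset α, ↑C ⊆ A ∧ (C.card : ℕ∞) = n ∧
    ∀ a ∈ A, ∃ c ∈ C, dist a c ≤ ε}

/-!
Fix a disintegration `(V_1, …, V_r)` of minimal length and call the *ancestors* of `v` the
vertices removed before `v` from the connected component that contained `v` at that time. They
separate `v` from every vertex removed no later than `v`, so the Markov property yields the chain
rule `T x = ∏ v, T(x v | x (ancestors v))`; since a vertex has at most one ancestor per earlier
step, each conditional factor is a table of at most `b ^ r` numbers in `[0, 1]`. Rounding these
numbers to the grid of mesh `ε / (d² b)` moves `T` by at most `ε / 2` in `ℓ¹` (telescope over the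
factors and sum out the variables from the last removed one backwards), so
`(⌈d² b / ε⌉ + 1) ^ (d b ^ r)` points form an `ε / 2`-net of `T_b(G)`, which is then traded for an
`ε`-net inside `T_b(G)` of no larger size.
-/

open Function Finset

lemma Function.DependsOn.apply_update_of_notMem {ι β : Type*} [DecidableEq ι] {α : ι → Type*}
    {f : (∀ i, α i) → β} {s : Set ι} (hf : DependsOn f s) {i : ι} (hi : i ∉ s)
    (x : ∀ i, α i) (t : α i) : f (update x i t) = f x :=
  hf fun _ hj => update_of_ne (ne_of_mem_of_not_mem hj hi) _ _

section Marginal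

variable {V : Type*} [Fintype V] [DecidableEq V] {b : ℕ} {T : (V → Fin b) → ℝ}
  {U U' : Finset V}

lemma marginal_nonneg (hT : ∀ x, 0 ≤ T x) (σ : V → Fin b) : 0 ≤ marginal T U σ :=
  sum_nonneg fun x _ => by split_ifs <;> simp [hT]

lemma dependsOn_marginal : DependsOn (marginal T U) U := fun _ _ h =>
  sum_congr rfl fun _ _ => if_congr
    ⟨fun H u hu => (H u hu).trans (h u hu), fun H u hu => (H u hu).trans (h u hu).symm⟩ rfl rfl

lemma marginal_empty (σ : V → Fin b) : marginal T ∅ σ = ∑ x, T x := by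
  simp [marginal]

lemma marginal_univ (σ : V → Fin b) : marginal T univ σ = T σ := by
  simp [marginal, ← funext_iff]

lemma marginal_anti (hT : ∀ x, 0 ≤ T x) (h : U ⊆ U') (σ : V → Fin b) :
    marginal T U' σ ≤ marginal T U σ :=
  sum_le_sum fun x _ => by
    by_cases hx : ∀ u ∈ U', x u = σ u
    · rw [if_pos hx, if_pos fun u hu => hx u (h hu)]
    · rw [if_neg hx]
      split_ifs <;> simp [hT]

lemma le_marginal (hT : ∀ x, 0 ≤ T x) (σ : V → Fin b) : T σ ≤ marginal T U σ :=
  marginal_univ (T := T) σ ▸ marginal_anti hT (subset_univ U) σ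

lemma sum_marginal_insert {w : V} (hw : w ∉ U) (σ : V → Fin b) :
    ∑ t, marginal T (insert w U) (update σ w t) = marginal T U σ := by
  unfold marginal
  rw [sum_comm]
  refine sum_congr rfl fun x _ => ?_
  have hcond : ∀ t, (∀ u ∈ insert w U, x u = update σ w t u) ↔
      (x w = t ∧ ∀ u ∈ U, x u = σ u) := fun t => by
    simp only [forall_mem_insert, update_self]
    exact and_congr_right' <| forall₂_congr fun u hu => by
      rw [update_of_ne (ne_of_mem_of_not_mem hu hw)]
  simp only [hcond, ite_and]
  by_cases hx : ∀ u ∈ U, x u = σ u <;> simp [hx]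

end Marginal

section Kernel

variable {V α β : Type*} [DecidableEq V] [LinearOrder β]

def IsAdapted (ord : V → β) (f : V → (V → α) → ℝ) : Prop :=
  ∀ v, DependsOn (f v) (insert v {u | ord u < ord v})

lemma IsAdapted.prod_update {ord : V → β} {f : V → (V → α) → ℝ} (hf : IsAdapted ord f)
    {s : Finset V} {a : V} (ha : a ∉ s) (hmax : ∀ v ∈ s, ord v ≤ ord a) (x : V → α) (t : α) :
    ∏ v ∈ s, f v (update x a t) = ∏ v ∈ s, f v x :=
  prod_congr rfl fun v hv => (hf v).apply_update_of_notMem (by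
    simp only [Set.mem_insert_iff, not_or]
    exact ⟨fun h => ha (h ▸ hv), not_lt_of_ge (hmax v hv)⟩) x t

variable [Fintype V] [Fintype α] [DecidableEq α]

def agreeOutside (x₀ : V → α) (s : Finset V) : Finset (V → α) :=
  univ.filter fun x => ∀ w ∉ s, x w = x₀ w

lemma agreeOutside_empty (x₀ : V → α) : agreeOutside x₀ ∅ = {x₀} := by
  ext x
  simp [agreeOutside, funext_iff]

lemma agreeOutside_univ (x₀ : V → α) : agreeOutside x₀ univ = univ := by
  ext x
  simp [agreeOutside]

lemma sum_agreeOutside_insert {x₀ : V → α} {s : Finset V} {a : V} (ha : a ∉ s)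
    (g : (V → α) → ℝ) :
    ∑ x ∈ agreeOutside x₀ (insert a s), g x =
      ∑ x ∈ agreeOutside x₀ s, ∑ t, g (update x a t) := by
  rw [← Finset.sum_product' (agreeOutside x₀ s) univ fun x t => g (update x a t)]
  refine sum_nbij' (fun y => (update y a (x₀ a), y a)) (fun p => update p.1 a p.2)
    ?_ ?_ ?_ ?_ fun y _ => by simp
  · intro y hy
    simp only [agreeOutside, mem_filter, mem_univ, true_and] at hy
    simp only [mem_product, agreeOutside, mem_filter, mem_univ, and_true, true_and]
    intro w hw
    rcases eq_or_ne w a with rfl | hwa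
    · exact update_self ..
    · rw [update_of_ne hwa]
      exact hy w (by simp [hwa, hw])
  · rintro ⟨x, t⟩ hx
    simp only [mem_product, agreeOutside, mem_filter, mem_univ, true_and, and_true] at hx ⊢
    intro w hw
    rw [mem_insert, not_or] at hw
    rw [update_of_ne hw.1]
    exact hx w hw.2
  · intro y _
    simp
  · rintro ⟨x, t⟩ hx
    simp only [mem_product, agreeOutside, mem_filter, mem_univ, true_and] at hx
    simp [← hx.1 a ha]

variable {ord : V → β} {f Q Qh : V → (V → α) → ℝ} {B C η : ℝ}

theorem sum_agreeOutside_prod_le_pow (hf : IsAdapted ord f) (hf0 : ∀ v x, 0 ≤ f v x)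
    (hB : ∀ v x, ∑ t, f v (update x v t) ≤ B) (x₀ : V → α) (s : Finset V) :
    ∑ x ∈ agreeOutside x₀ s, ∏ v ∈ s, f v x ≤ B ^ #s := by
  induction s using Finset.induction_on_max_value ord with
  | empty => simp [agreeOutside_empty]
  | insert a s ha hmax ih =>
    have hB0 : 0 ≤ B := (sum_nonneg fun t _ => hf0 a _).trans (hB a x₀)
    calc ∑ x ∈ agreeOutside x₀ (insert a s), ∏ v ∈ insert a s, f v x
        = ∑ x ∈ agreeOutside x₀ s, (∑ t, f a (update x a t)) * ∏ v ∈ s, f v x := by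
          simp only [sum_agreeOutside_insert ha, prod_insert ha, hf.prod_update ha hmax, sum_mul]
      _ ≤ ∑ x ∈ agreeOutside x₀ s, B * ∏ v ∈ s, f v x :=
          sum_le_sum fun x _ =>
            mul_le_mul_of_nonneg_right (hB a x) (prod_nonneg fun v _ => hf0 v x)
      _ ≤ B ^ #(insert a s) := by
          rw [← mul_sum, card_insert_of_notMem ha, pow_succ']
          exact mul_le_mul_of_nonneg_left ih hB0

theorem sum_agreeOutside_abs_prod_sub_prod_le (hQ : IsAdapted ord Q) (hQh : IsAdapted ord Qh)
    (hQ0 : ∀ v x, 0 ≤ Q v x) (hQh0 : ∀ v x, 0 ≤ Qh v x)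
    (hQ1 : ∀ v x, ∑ t, Q v (update x v t) ≤ 1)
    (hQhC : ∀ v x, ∑ t, Qh v (update x v t) ≤ C) (hC : 1 ≤ C)
    (hη : ∀ v x, ∑ t, |Q v (update x v t) - Qh v (update x v t)| ≤ η)
    (x₀ : V → α) (s : Finset V) :
    ∑ x ∈ agreeOutside x₀ s, |∏ v ∈ s, Q v x - ∏ v ∈ s, Qh v x| ≤ #s * η * C ^ (#s - 1) := by
  induction s using Finset.induction_on_max_value ord with
  | empty => simp
  | insert a s ha hmax ih =>
    set P := fun x => ∏ v ∈ s, Q v x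
    set Ph := fun x => ∏ v ∈ s, Qh v x
    have hη0 : 0 ≤ η := (sum_nonneg fun t _ => abs_nonneg _).trans (hη a x₀)
    have hsplit : ∀ x, |Q a x * P x - Qh a x * Ph x| ≤
        Q a x * |P x - Ph x| + |Q a x - Qh a x| * Ph x := fun x => by
      rw [show Q a x * P x - Qh a x * Ph x = Q a x * (P x - Ph x) + (Q a x - Qh a x) * Ph x by ring]
      refine (abs_add_le _ _).trans_eq ?_
      rw [abs_mul, abs_mul, abs_of_nonneg (hQ0 a x),
        abs_of_nonneg (prod_nonneg fun v _ => hQh0 v x)]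
    calc ∑ x ∈ agreeOutside x₀ (insert a s),
          |∏ v ∈ insert a s, Q v x - ∏ v ∈ insert a s, Qh v x|
        ≤ ∑ x ∈ agreeOutside x₀ s, ((∑ t, Q a (update x a t)) * |P x - Ph x|
            + (∑ t, |Q a (update x a t) - Qh a (update x a t)|) * Ph x) := by
          simp only [sum_agreeOutside_insert ha, prod_insert ha, sum_mul, ← sum_add_distrib]
          refine sum_le_sum fun x _ => sum_le_sum fun t _ => ?_
          simpa only [P, Ph, hQ.prod_update ha hmax, hQh.prod_update ha hmax] using
            hsplit (update x a t)
      _ ≤ ∑ x ∈ agreeOutside x₀ s, (|P x - Ph x| + η * Ph x) :=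
          sum_le_sum fun x _ => add_le_add
            (mul_le_of_le_one_left (abs_nonneg _) (hQ1 a x))
            (mul_le_mul_of_nonneg_right (hη a x) (prod_nonneg fun v _ => hQh0 v x))
      _ ≤ #s * η * C ^ (#s - 1) + η * C ^ #s := by
          rw [sum_add_distrib, ← mul_sum]
          exact add_le_add ih (mul_le_mul_of_nonneg_left
            (sum_agreeOutside_prod_le_pow hQh hQh0 hQhC x₀ s) hη0)
      _ ≤ #(insert a s) * η * C ^ (#(insert a s) - 1) := by
          rw [card_insert_of_notMem ha, Nat.add_sub_cancel, Nat.cast_succ]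
          have := mul_le_mul_of_nonneg_left (pow_le_pow_right₀ hC (Nat.sub_le #s 1))
            (mul_nonneg (Nat.cast_nonneg #s) hη0)
          linarith

end Kernel

section Greedy

variable {V : Type*} (G : SimpleGraph V)

noncomputable def componentReps (R : Set V) : Set V :=
  Set.range fun c : (G.induce R).ConnectedComponent => (c.out : V)

lemma componentReps_subset (R : Set V) : componentReps G R ⊆ R := by
  rintro _ ⟨c, rfl⟩
  exact c.out.2

lemma disStep_componentReps (R : Set V) : DisStep G R (componentReps G R) := by
  refine ⟨componentReps_subset G R, ?_, fun c => ⟨_, ⟨c, rfl⟩, c.out_eq⟩⟩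
  rintro _ _ ⟨c, rfl⟩ ⟨c', rfl⟩ hne h
  exact hne (by rw [show c = c' from (c.out_eq).symm.trans (h.trans (c'.out_eq))])

lemma diff_componentReps_ssubset {R : Set V} (hR : R.Nonempty) : R \ componentReps G R ⊂ R := by
  obtain ⟨v, hv⟩ := hR
  let c := (G.induce R).connectedComponentMk ⟨v, hv⟩
  exact Set.sdiff_ssubset_left_iff.mpr ⟨_, c.out.2, ⟨c, rfl⟩⟩

noncomputable def greedyRemaining : ℕ → Set V
  | 0 => Set.univ
  | n + 1 => greedyRemaining n \ componentReps G (greedyRemaining n)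

noncomputable def greedyDisintegration (n : ℕ) : Set V :=
  componentReps G (greedyRemaining G n)

lemma greedyRemaining_eq (n : ℕ) :
    greedyRemaining G n = Set.univ \ ⋃ j < n, greedyDisintegration G j := by
  induction n with
  | zero => simp [greedyRemaining]
  | succ n ih =>
    rw [greedyRemaining, ← greedyDisintegration, ih, Set.sdiff_sdiff]
    congr 1
    ext x
    simp only [Set.mem_union, Set.mem_iUnion, exists_prop, Nat.lt_succ_iff_lt_or_eq]
    grind

lemma ncard_greedyRemaining_le [Finite V] (n : ℕ) :
    (greedyRemaining G n).ncard ≤ Nat.card V - n := by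
  induction n with
  | zero => simp [greedyRemaining]
  | succ n ih =>
    rcases (greedyRemaining G n).eq_empty_or_nonempty with h | h
    · simp [greedyRemaining, h]
    · have := Set.ncard_lt_ncard (diff_componentReps_ssubset G h)
      rw [greedyRemaining]
      omega

lemma isDisintegration_greedy [Finite V] :
    IsDisintegration G (greedyDisintegration G) (Nat.card V) := by
  have hempty : ∀ i, Nat.card V ≤ i → greedyRemaining G i = ∅ := fun i hi =>
    (Set.ncard_eq_zero).mp (by have := ncard_greedyRemaining_le G i; omega)
  refine ⟨fun i hi => ?_, ?_, fun i => greedyRemaining_eq G i ▸ disStep_componentReps G _⟩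
  · exact Set.subset_empty_iff.mp (hempty i hi ▸ componentReps_subset G _)
  · refine Set.eq_univ_of_forall fun x => ?_
    have hx : x ∉ greedyRemaining G (Nat.card V) := by simp [hempty _ le_rfl]
    rw [greedyRemaining_eq] at hx
    simp only [Set.mem_sdiff, Set.mem_univ, true_and, not_not, Set.mem_iUnion] at hx ⊢
    obtain ⟨j, -, hj⟩ := hx
    exact ⟨j, hj⟩

theorem exists_isDisintegration_of_resilience [Finite V] {r : ℕ} (hr : resilience G = r) :
    ∃ D, IsDisintegration G D r := by
  rw [← hr]
  exact Nat.sInf_mem (s := {r | ∃ D, IsDisintegration G D r})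
    ⟨Nat.card V, _, isDisintegration_greedy G⟩

end Greedy

section Ancestors

variable {V : Type*} {G : SimpleGraph V} {D : ℕ → Set V} {r i : ℕ} {u v : V}

def remaining (D : ℕ → Set V) (i : ℕ) : Set V := Set.univ \ ⋃ j < i, D j

noncomputable def stepOf (D : ℕ → Set V) (v : V) : ℕ := sInf {i | v ∈ D i}

lemma remaining_anti {i j : ℕ} (h : i ≤ j) : remaining D j ⊆ remaining D i :=
  Set.sdiff_subset_sdiff_right <| Set.iUnion₂_subset fun k hk =>
    Set.subset_iUnion₂ (s := fun k (_ : k < j) => D k) k (hk.trans_le h)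

namespace IsDisintegration

lemma subset_remaining (hD : IsDisintegration G D r) (i : ℕ) : D i ⊆ remaining D i :=
  (hD.2.2 i).fst

lemma mem_stepOf (hD : IsDisintegration G D r) (v : V) : v ∈ D (stepOf D v) := by
  obtain ⟨i, hi⟩ := Set.mem_iUnion.mp (hD.2.1.symm ▸ Set.mem_univ v)
  exact Nat.sInf_mem (s := {i | v ∈ D i}) ⟨i, hi⟩

lemma stepOf_eq (hD : IsDisintegration G D r) (hv : v ∈ D i) : stepOf D v = i := by
  refine le_antisymm (Nat.sInf_le hv) (not_lt.mp fun hlt => ?_)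
  exact (hD.subset_remaining i hv).2 (Set.mem_iUnion₂.mpr ⟨_, hlt, hD.mem_stepOf v⟩)

lemma mem_remaining_iff (hD : IsDisintegration G D r) :
    v ∈ remaining D i ↔ i ≤ stepOf D v := by
  simp only [remaining, Set.mem_sdiff, Set.mem_univ, true_and, Set.mem_iUnion₂, not_exists]
  refine ⟨fun h => not_lt.mp fun hlt => h _ hlt (hD.mem_stepOf v), fun h j hj hv => ?_⟩
  exact (hD.stepOf_eq hv ▸ hj).not_ge h

lemma stepOf_lt (hD : IsDisintegration G D r) (v : V) : stepOf D v < r :=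
  not_le.mp fun h => (hD.1 _ h ▸ hD.mem_stepOf v : v ∈ (∅ : Set V))

lemma eq_of_reachable (hD : IsDisintegration G D r) {u' : V} (hu : u ∈ D i) (hu' : u' ∈ D i)
    (hui : u ∈ remaining D i) (hu'i : u' ∈ remaining D i)
    (h : (G.induce (remaining D i)).Reachable ⟨u, hui⟩ ⟨u', hu'i⟩) : u = u' := by
  by_contra hne
  exact (hD.2.2 i).snd.1 u u' hu hu' hne (SimpleGraph.ConnectedComponent.eq.mpr h)

end IsDisintegration

/-- The conditioning variables of `v` in the chain rule for a Markov tensor. -/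
noncomputable def ancestors [Finite V] (G : SimpleGraph V) (D : ℕ → Set V) (v : V) : Finset V :=
  (Set.toFinite {u | stepOf D u < stepOf D v ∧
    ∃ (hu : u ∈ remaining D (stepOf D u)) (hv : v ∈ remaining D (stepOf D u)),
      (G.induce (remaining D (stepOf D u))).Reachable ⟨u, hu⟩ ⟨v, hv⟩}).toFinset

variable [Finite V]

lemma mem_ancestors : u ∈ ancestors G D v ↔ stepOf D u < stepOf D v ∧
    ∃ (hu : u ∈ remaining D (stepOf D u)) (hv : v ∈ remaining D (stepOf D u)),
      (G.induce (remaining D (stepOf D u))).Reachable ⟨u, hu⟩ ⟨v, hv⟩ :=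
  Set.Finite.mem_toFinset _

lemma stepOf_lt_of_mem_ancestors (h : u ∈ ancestors G D v) : stepOf D u < stepOf D v :=
  (mem_ancestors.mp h).1

lemma self_notMem_ancestors : v ∉ ancestors G D v := fun h =>
  lt_irrefl _ (stepOf_lt_of_mem_ancestors h)

namespace IsDisintegration

lemma card_ancestors_le (hD : IsDisintegration G D r) (v : V) :
    #(ancestors G D v) ≤ stepOf D v := by
  simpa using card_le_card_of_injOn (stepOf D) (t := range (stepOf D v))
    (fun u hu => mem_range.mpr (stepOf_lt_of_mem_ancestors hu)) fun u hu u' hu' heq => by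
      obtain ⟨-, hur, hvr, huv⟩ := mem_ancestors.mp hu
      obtain ⟨-, hu'⟩ := mem_ancestors.mp hu'
      have hu'D := hD.mem_stepOf u'
      rw [← heq] at hu' hu'D
      obtain ⟨hu'r, hvr', hu'v⟩ := hu'
      exact hD.eq_of_reachable (hD.mem_stepOf u) hu'D hur hu'r (huv.trans hu'v.symm)

lemma exists_mem_support_ancestors (hD : IsDisintegration G D r)
    (hle : stepOf D u ≤ stepOf D v) (hne : u ≠ v)
    (w : G.Walk v u) : ∃ z ∈ w.support, z ∈ ancestors G D v := by
  set i := stepOf D v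
  have hvi : v ∈ remaining D i := hD.mem_remaining_iff.mpr le_rfl
  set K : Set V := {x | ∃ hx : x ∈ remaining D i,
    (G.induce (remaining D i)).Reachable ⟨x, hx⟩ ⟨v, hvi⟩}
  have huK : u ∉ K := fun ⟨hui, hreach⟩ => by
    have hstep : stepOf D u = i := le_antisymm hle (hD.mem_remaining_iff.mp hui)
    have huD := hD.mem_stepOf u
    rw [hstep] at huD
    exact hne (hD.eq_of_reachable huD (hD.mem_stepOf v) hui hvi hreach)
  obtain ⟨d, hd, ⟨hyi, hyv⟩, hzK⟩ := w.exists_boundary_dart K ⟨hvi, .rfl⟩ huK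
  refine ⟨d.snd, w.dart_snd_mem_support_of_mem_darts hd, ?_⟩
  -- the walk leaves `v`'s component at `d`, so `d.snd` was removed before step `i`
  have hzi : d.snd ∉ remaining D i := fun hzi =>
    hzK ⟨hzi, (SimpleGraph.Adj.reachable (by simpa using d.adj.symm)).trans hyv⟩
  have hlt : stepOf D d.snd < i := not_le.mp fun h => hzi (hD.mem_remaining_iff.mpr h)
  have hsub : remaining D i ⊆ remaining D (stepOf D d.snd) := remaining_anti hlt.le
  have hyv' : (G.induce (remaining D (stepOf D d.snd))).Reachable ⟨d.fst, hsub hyi⟩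
      ⟨v, hsub hvi⟩ := hyv.map (G.induceHomOfLE hsub).toHom
  refine mem_ancestors.mpr ⟨hlt, hD.mem_remaining_iff.mpr le_rfl, hsub hvi, ?_⟩
  exact (SimpleGraph.Adj.reachable (by simpa using d.adj.symm)).trans hyv'

end IsDisintegration

end Ancestors

section Factorization

variable {V : Type*} [Fintype V] [DecidableEq V] {G : SimpleGraph V} {D : ℕ → Set V} {r b : ℕ}
  {T : (V → Fin b) → ℝ}

theorem IsDisintegration.marginal_mul_prod_marginal_ancestors (hD : IsDisintegration G D r)
    (hT1 : ∑ x, T x = 1) (hM : IsMarkov G T) (x : V → Fin b) (s : Finset V)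
    (hs : ∀ v ∈ s, ancestors G D v ⊆ s) :
    marginal T s x * ∏ v ∈ s, marginal T (ancestors G D v) x =
      ∏ v ∈ s, marginal T (insert v (ancestors G D v)) x := by
  induction s using Finset.induction_on_max_value (stepOf D) with
  | empty => simp [marginal_empty, hT1]
  | insert a s ha hmax ih =>
    have has : ancestors G D a ⊆ s := fun u hu =>
      (mem_insert.mp (hs a (mem_insert_self a s) hu)).resolve_left
        fun h => self_notMem_ancestors (h ▸ hu)
    have hs' : ∀ v ∈ s, ancestors G D v ⊆ s := fun v hv u hu =>
      (mem_insert.mp (hs v (mem_insert_of_mem hv) hu)).resolve_left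
        fun h => (h ▸ stepOf_lt_of_mem_ancestors hu).not_ge (hmax v hv)
    have hsep : Separates G ↑({a} : Finset V) ↑(s \ ancestors G D a) ↑(ancestors G D a) := by
      rintro a' ha' u hu w
      rw [coe_singleton, Set.mem_singleton_iff] at ha'
      subst ha'
      rw [coe_sdiff, Set.mem_sdiff, mem_coe] at hu
      exact hD.exists_mem_support_ancestors (hmax u hu.1) (ne_of_mem_of_not_mem hu.1 ha) w
    have hmark := hM {a} (s \ ancestors G D a) (ancestors G D a)
      (disjoint_singleton_left.mpr fun h => ha (mem_sdiff.mp h).1)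
      (disjoint_singleton_left.mpr self_notMem_ancestors) sdiff_disjoint hsep x
    rw [union_assoc, sdiff_union_of_subset has, ← insert_eq, ← insert_eq] at hmark
    rw [prod_insert ha, prod_insert ha, ← ih hs', ← mul_assoc, hmark, mul_assoc]

/-- Where the marginal of the ancestors vanishes this is `0` (as `a / 0 = 0`), and so is `T`. -/
noncomputable def condFactor (G : SimpleGraph V) (D : ℕ → Set V) (T : (V → Fin b) → ℝ) (v : V)
    (x : V → Fin b) : ℝ :=
  marginal T (insert v (ancestors G D v)) x / marginal T (ancestors G D v) x

theorem IsDisintegration.prod_condFactor (hD : IsDisintegration G D r) (hT0 : ∀ x, 0 ≤ T x)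
    (hT1 : ∑ x, T x = 1) (hM : IsMarkov G T) (x : V → Fin b) :
    ∏ v, condFactor G D T v x = T x := by
  have hchain := hD.marginal_mul_prod_marginal_ancestors hT1 hM x univ fun _ _ => subset_univ _
  rw [marginal_univ] at hchain
  unfold condFactor
  rw [prod_div_distrib, ← hchain]
  by_cases h : ∏ v, marginal T (ancestors G D v) x = 0
  · obtain ⟨v, -, hv⟩ := prod_eq_zero_iff.mp h
    simp [h, le_antisymm (hv ▸ le_marginal hT0 x) (hT0 x)]
  · exact mul_div_cancel_right₀ _ h

lemma condFactor_nonneg (hT0 : ∀ x, 0 ≤ T x) (v : V) (x : V → Fin b) :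
    0 ≤ condFactor G D T v x :=
  div_nonneg (marginal_nonneg hT0 x) (marginal_nonneg hT0 x)

lemma condFactor_le_one (hT0 : ∀ x, 0 ≤ T x) (v : V) (x : V → Fin b) :
    condFactor G D T v x ≤ 1 :=
  div_le_one_of_le₀ (marginal_anti hT0 (subset_insert _ _) x) (marginal_nonneg hT0 x)

lemma sum_condFactor_update_le_one (v : V) (x : V → Fin b) :
    ∑ t, condFactor G D T v (update x v t) ≤ 1 := by
  simp only [condFactor, dependsOn_marginal.apply_update_of_notMem
    (mem_coe.not.mpr self_notMem_ancestors), ← sum_div,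
    sum_marginal_insert self_notMem_ancestors]
  exact div_self_le_one _

lemma dependsOn_condFactor (v : V) :
    DependsOn (condFactor G D T v) ↑(insert v (ancestors G D v)) := fun _ _ h => by
  unfold condFactor
  rw [dependsOn_marginal h, dependsOn_marginal fun u hu => h u (mem_insert_of_mem hu)]

lemma isAdapted_condFactor : IsAdapted (stepOf D) (condFactor G D T) := fun v =>
  (dependsOn_condFactor v).mono fun u hu => by
    rcases mem_insert.mp hu with rfl | hu
    · exact Set.mem_insert _ _
    · exact Set.mem_insert_of_mem _ (stepOf_lt_of_mem_ancestors hu)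

end Factorization

section Covering

lemma l1Dist_comm {α : Type*} [Fintype α] (f g : α → ℝ) : l1Dist f g = l1Dist g f :=
  sum_congr rfl fun _ _ => abs_sub_comm _ _

lemma l1Dist_triangle {α : Type*} [Fintype α] (f g h : α → ℝ) :
    l1Dist f h ≤ l1Dist f g + l1Dist g h := by
  rw [l1Dist, l1Dist, l1Dist, ← sum_add_distrib]
  exact sum_le_sum fun _ _ => abs_sub_le _ _ _

lemma coverNum_le_card {α : Type*} {A : Set α} {dist : α → α → ℝ} {ε : ℝ} (C : Finset α)
    (hCA : ↑C ⊆ A) (hC : ∀ a ∈ A, ∃ c ∈ C, dist a c ≤ ε) : coverNum A dist ε ≤ #C :=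
  sInf_le ⟨C, hCA, rfl, hC⟩

lemma coverNum_le_one_of_subsingleton {α : Type*} {A : Set α} {dist : α → α → ℝ} {ε : ℝ}
    (hA : A.Subsingleton) (h : ∀ a, dist a a ≤ ε) : coverNum A dist ε ≤ 1 := by
  refine (coverNum_le_card hA.finite.toFinset (by simp)
    fun a ha => ⟨a, by simpa using ha, h a⟩).trans ?_
  exact_mod_cast card_le_one.mpr fun a ha a' ha' => hA (by simpa using ha) (by simpa using ha')

theorem coverNum_le_card_of_forall_l1Dist_le_half {α : Type*} [Fintype α] {A : Set (α → ℝ)}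
    {ε : ℝ} (C : Finset (α → ℝ)) (h : ∀ a ∈ A, ∃ c ∈ C, l1Dist a c ≤ ε / 2) :
    coverNum A l1Dist ε ≤ #C := by
  classical
  let P := fun c => ∃ a ∈ A, l1Dist a c ≤ ε / 2
  choose! g hgA hg using fun c (hc : P c) => hc
  refine (coverNum_le_card ((C.filter P).image g) ?_ ?_).trans
    (by exact_mod_cast card_image_le.trans (card_filter_le _ _))
  · intro y hy
    obtain ⟨c, hc, rfl⟩ := mem_image.mp hy
    exact hgA c (mem_filter.mp hc).2
  · intro a ha
    obtain ⟨c, hc, hac⟩ := h a ha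
    have hP : P c := ⟨a, ha, hac⟩
    refine ⟨g c, mem_image_of_mem g (mem_filter.mpr ⟨hc, hP⟩), ?_⟩
    calc l1Dist a (g c) ≤ l1Dist a c + l1Dist c (g c) := l1Dist_triangle _ _ _
      _ ≤ ε / 2 + ε / 2 := add_le_add hac (l1Dist_comm c (g c) ▸ hg c hP)
      _ = ε := add_halves ε

lemma coverNum_ne_top_and_log_le {α : Type*} {A : Set α} {dist : α → α → ℝ} {ε : ℝ} {N : ℕ}
    (h : coverNum A dist ε ≤ N) :
    coverNum A dist ε ≠ ⊤ ∧ Real.log (coverNum A dist ε).toNat ≤ Real.log N := by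
  refine ⟨ne_top_of_le_ne_top (ENat.natCast_ne_top N) h, ?_⟩
  have hle : (coverNum A dist ε).toNat ≤ N := by
    simpa using ENat.toNat_le_toNat h (ENat.natCast_ne_top N)
  rcases Nat.eq_zero_or_pos (coverNum A dist ε).toNat with h0 | hpos
  · simpa [h0] using Real.log_natCast_nonneg N
  · exact Real.log_le_log (by exact_mod_cast hpos) (by exact_mod_cast hle)

end Covering

section Quantization

noncomputable def quantize (s : ℝ) (M : ℕ) (q : ℝ) : Fin (M + 1) :=
  ⟨min M (round (q / s)).toNat, Nat.lt_succ_of_le (min_le_left _ _)⟩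

lemma abs_sub_quantize_mul_le {s q : ℝ} {M : ℕ} (hs : 0 < s) (hMs : 1 ≤ M * s) (hq0 : 0 ≤ q)
    (hq1 : q ≤ 1) : |q - (quantize s M q : ℕ) * s| ≤ s / 2 := by
  have hround := abs_le.mp (abs_sub_round (q / s))
  have hqs : q / s ≤ M := (div_le_iff₀ hs).mpr (hq1.trans hMs)
  have h0 : 0 ≤ round (q / s) := by
    have : ((-1 : ℤ) : ℝ) < round (q / s) := by push_cast; linarith [div_nonneg hq0 hs.le]
    exact Int.lt_iff_add_one_le.mp (by exact_mod_cast this)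
  have hM : round (q / s) ≤ M := by
    have : (round (q / s) : ℝ) < ((M + 1 : ℤ) : ℝ) := by push_cast; linarith
    exact Int.lt_add_one_iff.mp (by exact_mod_cast this)
  have hval : ((quantize s M q : ℕ) : ℝ) = round (q / s) := by
    simp only [quantize, min_eq_right (Int.toNat_le.mpr hM)]
    exact_mod_cast Int.toNat_of_nonneg h0
  rw [hval, show q - round (q / s) * s = s * (q / s - round (q / s)) by field_simp, abs_mul,
    abs_of_pos hs]
  nlinarith [abs_sub_round (q / s)]

end Quantization

section Encoding

variable {V : Type*} [Fintype V] [DecidableEq V] {G : SimpleGraph V} {D : ℕ → Set V}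
  {r b M : ℕ} {s : ℝ} {T : (V → Fin b) → ℝ}

abbrev FactorCode (G : SimpleGraph V) (D : ℕ → Set V) (b M : ℕ) : Type _ :=
  ∀ v : V, ({u // u ∈ insert v (ancestors G D v)} → Fin b) → Fin (M + 1)

noncomputable def decode (s : ℝ) (k : FactorCode G D b M) (x : V → Fin b) : ℝ :=
  ∏ v, (k v fun u => x u : ℕ) * s

noncomputable def encode (s : ℝ) (x₀ : V → Fin b) (T : (V → Fin b) → ℝ) :
    FactorCode G D b M :=
  fun v σ => quantize s M <| condFactor G D T v fun w =>
    if h : w ∈ insert v (ancestors G D v) then σ ⟨w, h⟩ else x₀ w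

lemma decode_encode (x₀ x : V → Fin b) :
    decode s (encode s x₀ T : FactorCode G D b M) x =
      ∏ v, (quantize s M (condFactor G D T v x) : ℕ) * s :=
  prod_congr rfl fun v _ => by
    have hext : condFactor G D T v (fun w => if h : w ∈ insert v (ancestors G D v) then x w
        else x₀ w) = condFactor G D T v x :=
      dependsOn_condFactor v fun u hu => dif_pos (mem_coe.mp hu)
    rw [encode, hext]

theorem IsDisintegration.l1Dist_decode_encode_le (hD : IsDisintegration G D r)
    (hT : T ∈ probTensors b G) (hs : 0 < s) (hMs : 1 ≤ M * s) (x₀ : V → Fin b) :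
    l1Dist T (decode s (encode s x₀ T : FactorCode G D b M)) ≤
      Fintype.card V * (b * (s / 2)) * (1 + b * (s / 2)) ^ (Fintype.card V - 1) := by
  obtain ⟨hT0, hT1, hM⟩ := hT
  set Qh : V → (V → Fin b) → ℝ := fun v x => (quantize s M (condFactor G D T v x) : ℕ) * s
  have hdiff : ∀ v x, |condFactor G D T v x - Qh v x| ≤ s / 2 := fun v x =>
    abs_sub_quantize_mul_le hs hMs (condFactor_nonneg hT0 v x) (condFactor_le_one hT0 v x)
  have hQh : IsAdapted (stepOf D) Qh := fun v _ _ h => by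
    simp only [Qh, isAdapted_condFactor v h]
  have hsumQh : ∀ v x, ∑ t, Qh v (update x v t) ≤ 1 + b * (s / 2) := fun v x =>
    calc ∑ t, Qh v (update x v t) ≤ ∑ t, (condFactor G D T v (update x v t) + s / 2) :=
          sum_le_sum fun t _ => by linarith [(abs_le.mp (hdiff v (update x v t))).1]
      _ ≤ 1 + b * (s / 2) := by
          rw [sum_add_distrib, sum_const, card_univ, Fintype.card_fin, nsmul_eq_mul]
          linarith [sum_condFactor_update_le_one (G := G) (D := D) (T := T) v x]
  have hη : ∀ v x, ∑ t, |condFactor G D T v (update x v t) - Qh v (update x v t)| ≤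
      b * (s / 2) := fun v x => by
    simpa using sum_le_card_nsmul univ _ _ fun t _ => hdiff v (update x v t)
  have h := sum_agreeOutside_abs_prod_sub_prod_le isAdapted_condFactor hQh
    (condFactor_nonneg hT0) (fun _ _ => by positivity) sum_condFactor_update_le_one hsumQh
    (le_add_of_nonneg_right (by positivity)) hη x₀ univ
  rw [agreeOutside_univ, card_univ] at h
  refine le_of_eq_of_le (sum_congr rfl fun x _ => ?_) h
  rw [decode_encode, hD.prod_condFactor hT0 hT1 hM]

theorem IsDisintegration.card_factorCode_le (hD : IsDisintegration G D r) (hb : 0 < b) :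
    Fintype.card (FactorCode G D b M) ≤ (M + 1) ^ (Fintype.card V * b ^ r) := by
  have hcard : ∀ v, #(insert v (ancestors G D v)) ≤ r := fun v =>
    (card_insert_le _ _).trans (by linarith [hD.card_ancestors_le v, hD.stepOf_lt v])
  calc Fintype.card (FactorCode G D b M) ≤ ∏ _v : V, (M + 1) ^ b ^ r := by
        rw [Fintype.card_pi]
        refine prod_le_prod' fun v _ => ?_
        rw [Fintype.card_fun, Fintype.card_fun, Fintype.card_fin, Fintype.card_fin,
          Fintype.card_coe]
        exact Nat.pow_le_pow_right M.succ_pos (Nat.pow_le_pow_right hb (hcard v))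
    _ = (M + 1) ^ (Fintype.card V * b ^ r) := by rw [prod_const, card_univ, ← pow_mul']

end Encoding

section Estimates

lemma one_add_pow_le_one_div_one_sub_mul {x : ℝ} {n : ℕ} (hx : 0 ≤ x) (hnx : n * x < 1) :
    (1 + x) ^ n ≤ 1 / (1 - n * x) :=
  calc (1 + x) ^ n ≤ Real.exp x ^ n :=
        pow_le_pow_left₀ (by linarith) (by linarith [Real.add_one_le_exp x]) n
    _ = Real.exp (n * x) := (Real.exp_nat_mul x n).symm
    _ ≤ 1 / (1 - n * x) := Real.exp_bound_div_one_sub_of_interval (by positivity) hnx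

lemma quantization_error_le_half {d b : ℕ} {ε : ℝ} (hd : 1 ≤ d) (hb : 1 ≤ b) (hε0 : 0 < ε)
    (hε1 : ε ≤ 1) :
    d * (b * (ε / (d ^ 2 * b) / 2)) * (1 + b * (ε / (d ^ 2 * b) / 2)) ^ (d - 1) ≤ ε / 2 := by
  have hdR : (1 : ℝ) ≤ d := by exact_mod_cast hd
  have hbR : (0 : ℝ) < b := by exact_mod_cast hb
  have hx : b * (ε / (d ^ 2 * b) / 2) = ε / (2 * d ^ 2) := by field_simp
  have hnx : ((d - 1 : ℕ) : ℝ) * (ε / (2 * d ^ 2)) ≤ 1 - 1 / d := by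
    have hgap : 1 - 1 / d - (d - 1) * (ε / (2 * d ^ 2)) =
        (d - 1) * (2 * d - ε) / (2 * d ^ 2) := by
      field_simp
    rw [Nat.cast_sub hd, Nat.cast_one, ← sub_nonneg, hgap]
    exact div_nonneg (mul_nonneg (by linarith) (by linarith)) (by positivity)
  have hd0 : 0 < 1 / (d : ℝ) := by positivity
  have hpow : (1 + ε / (2 * d ^ 2)) ^ (d - 1) ≤ d :=
    calc (1 + ε / (2 * d ^ 2)) ^ (d - 1) ≤ 1 / (1 - (d - 1 : ℕ) * (ε / (2 * d ^ 2))) :=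
          one_add_pow_le_one_div_one_sub_mul (by positivity) (by linarith)
      _ ≤ 1 / (1 / d) := one_div_le_one_div_of_le hd0 (by linarith)
      _ = d := one_div_one_div _
  rw [hx]
  calc (d : ℝ) * (ε / (2 * d ^ 2)) * (1 + ε / (2 * d ^ 2)) ^ (d - 1)
      ≤ d * (ε / (2 * d ^ 2)) * d := mul_le_mul_of_nonneg_left hpow (by positivity)
    _ = ε / 2 := by field_simp

lemma log_ceil_add_one_le {d b r : ℕ} {ε : ℝ} (hd : 1 ≤ d) (hb : 2 ≤ b) (hr : 1 ≤ r)
    (hε0 : 0 < ε) (hε1 : ε < 1) :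
    Real.log ((⌈(d : ℝ) ^ 2 * b / ε⌉₊ + 1 : ℕ) : ℝ) ≤
      Real.log (2 * d ^ (r + 1) * b / ε) := by
  have hdR : (1 : ℝ) ≤ d := by exact_mod_cast hd
  have hbR : (2 : ℝ) ≤ b := by exact_mod_cast hb
  have hceil : (⌈(d : ℝ) ^ 2 * b / ε⌉₊ : ℝ) < d ^ 2 * b / ε + 1 :=
    Nat.ceil_lt_add_one (by positivity)
  have htwo : 2 ≤ (d : ℝ) ^ 2 * b / ε := by
    rw [le_div_iff₀ hε0]
    nlinarith [one_le_pow₀ (n := 2) hdR]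
  have hpow : (d : ℝ) ^ 2 ≤ d ^ (r + 1) := pow_le_pow_right₀ hdR (by omega)
  refine Real.log_le_log (by positivity) ?_
  calc ((⌈(d : ℝ) ^ 2 * b / ε⌉₊ + 1 : ℕ) : ℝ) ≤ 2 * (d ^ 2 * b / ε) := by push_cast; linarith
    _ = 2 * d ^ 2 * b / ε := by ring
    _ ≤ 2 * d ^ (r + 1) * b / ε := by gcongr

lemma mul_pow_mul_log_nonneg {d b r : ℕ} {ε : ℝ} (hb : 1 ≤ b) (hε0 : 0 < ε)
    (hε1 : ε < 1) :
    0 ≤ (d : ℝ) * b ^ r * Real.log (2 * d ^ (r + 1) * b / ε) := by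
  rcases Nat.eq_zero_or_pos d with rfl | hd
  · simp
  refine mul_nonneg (by positivity) (Real.log_nonneg ?_)
  rw [le_div_iff₀ hε0, one_mul]
  have hdR : (1 : ℝ) ≤ d := by exact_mod_cast hd
  have hbR : (1 : ℝ) ≤ b := by exact_mod_cast hb
  nlinarith [one_le_pow₀ (n := r + 1) hdR]

end Estimates

lemma probTensors_subsingleton {V : Type*} [Fintype V] [DecidableEq V] (b : ℕ)
    [Subsingleton (V → Fin b)] (G : SimpleGraph V) : (probTensors b G).Subsingleton :=
  fun T hT T' hT' => funext fun x => by
    rw [← Fintype.sum_subsingleton T x, ← Fintype.sum_subsingleton T' x, hT.2.1, hT'.2.1]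

theorem IsDisintegration.coverNum_probTensors_le {V : Type*} [Fintype V] [DecidableEq V]
    [Nonempty V] {G : SimpleGraph V} {D : ℕ → Set V} {r b : ℕ} {ε : ℝ}
    (hD : IsDisintegration G D r) (hb : 1 ≤ b) (hε0 : 0 < ε) (hε1 : ε ≤ 1) :
    coverNum (probTensors b G) l1Dist ε ≤
      ((⌈(Fintype.card V : ℝ) ^ 2 * b / ε⌉₊ + 1) ^ (Fintype.card V * b ^ r) : ℕ) := by
  set d := Fintype.card V
  set M := ⌈(d : ℝ) ^ 2 * b / ε⌉₊
  have hd : 1 ≤ d := Fintype.card_pos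
  have hs : 0 < ε / (d ^ 2 * b) := by positivity
  have hMs : 1 ≤ M * (ε / (d ^ 2 * b)) := by
    calc (1 : ℝ) = d ^ 2 * b / ε * (ε / (d ^ 2 * b)) := by field_simp
      _ ≤ M * (ε / (d ^ 2 * b)) := mul_le_mul_of_nonneg_right (Nat.le_ceil _) hs.le
  let x₀ : V → Fin b := fun _ => ⟨0, hb⟩
  refine (coverNum_le_card_of_forall_l1Dist_le_half
    ((univ : Finset (FactorCode G D b M)).image (decode (ε / (d ^ 2 * b)))) fun T hT =>
      ⟨_, mem_image_of_mem _ (mem_univ (encode _ x₀ T)),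
        (hD.l1Dist_decode_encode_le hT hs hMs x₀).trans
          (quantization_error_le_half hd hb hε0 hε1)⟩).trans ?_
  exact_mod_cast card_image_le.trans (hD.card_factorCode_le hb)

theorem stmt19 {V : Type*} [Fintype V] [DecidableEq V] (G : SimpleGraph V)
    (b : ℕ) (hb : 1 ≤ b) (ε : ℝ) (hε0 : 0 < ε) (hε1 : ε < 1)
    (d r : ℕ) (hd : Fintype.card V = d) (hr : resilience G = r) :
    coverNum (probTensors b G) l1Dist ε ≠ ⊤ ∧
    Real.log ((coverNum (probTensors b G) l1Dist ε).toNat : ℝ)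
      ≤ (d : ℝ) * (b : ℝ) ^ r * Real.log (2 * (d : ℝ) ^ (r + 1) * b / ε) := by
  by_cases hdeg : b = 1 ∨ d = 0
  · have : Subsingleton (V → Fin b) := by
      rcases hdeg with rfl | hd0
      · infer_instance
      · have := Fintype.card_eq_zero_iff.mp (hd.trans hd0)
        infer_instance
    have h1 := coverNum_le_one_of_subsingleton (probTensors_subsingleton b G)
      fun T => (by simp [l1Dist, hε0.le] : l1Dist T T ≤ ε)
    obtain ⟨hne, hlog⟩ := coverNum_ne_top_and_log_le (N := 1) (by exact_mod_cast h1)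
    exact ⟨hne, hlog.trans (by simpa using mul_pow_mul_log_nonneg hb hε0 hε1)⟩
  obtain ⟨hb1, hd0⟩ := not_or.mp hdeg
  have : Nonempty V := Fintype.card_pos_iff.mp (by omega)
  obtain ⟨D, hD⟩ := exists_isDisintegration_of_resilience G hr
  have hr1 : 1 ≤ r := (hD.stepOf_lt (Classical.arbitrary V)).trans_le' (Nat.zero_le _)
  obtain ⟨hne, hlog⟩ := coverNum_ne_top_and_log_le (hD.coverNum_probTensors_le hb hε0 hε1.le)
  refine ⟨hne, hlog.trans ?_⟩
  rw [hd, Nat.cast_pow, Real.log_pow, Nat.cast_mul, Nat.cast_pow]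
  exact mul_le_mul_of_nonneg_left (log_ceil_add_one_le (by omega) (by omega) hr1 hε0 hε1)
    (by positivity)
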